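/- Let f, g : ZMod 6 → ℚ with ρ_n(f) = ρ_n(g) for n = 1, ..., 5 but ρ₆(f) ≠ ρ₆(g). Then f̂(0) = ĝ(0), f̂(k) = ĝ(k) = 0 for k = 2, 3, 4, |f̂(1)| = |ĝ(1)|, and f̂(1)⁶ ≠ ĝ(1)⁶. -/

import Mathlib

open Finset Real Complex

/-- The `n`-th order autocorrelation of `h : ZMod 6 → ℚ`. -/
def rho (n : ℕ) (h : ZMod 6 → ℚ) (t : Fin (n - 1) → ZMod 6) : ℚ :=
  ∑ x, h x * ∏ i, h (x + t i)

/-- The discrete Fourier transform of `f : ZMod 6 → ℚ` at frequency `k`. -/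
noncomputable def dft (f : ZMod 6 → ℚ) (k : ZMod 6) : ℂ :=
  ∑ x : ZMod 6, (f x : ℂ) * Complex.exp (-2 * π * Complex.I * (k.val : ℂ) * (x.val : ℂ) / 6)

noncomputable def zz : ℂ := Complex.exp (-2 * (π:ℂ) * Complex.I / 6)
noncomputable def ee (a : ZMod 6) : ℂ := zz ^ a.val

lemma zz6 : zz ^ 6 = 1 := by
  rw [zz, ← Complex.exp_nat_mul]
  have : (6:ℕ) * (-2 * (π:ℂ) * Complex.I / 6) = (-1 : ℤ) * (2 * π * Complex.I) := by
    push_cast; ring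
  rw [this, Complex.exp_int_mul_two_pi_mul_I]

lemma zz_pow_mod (m : ℕ) : zz ^ m = zz ^ (m % 6) := by
  conv_lhs => rw [← Nat.div_add_mod m 6]
  rw [pow_add, pow_mul, zz6, one_pow, one_mul]

lemma ee_natCast (m : ℕ) : ee (m : ZMod 6) = zz ^ m := by
  rw [ee, ZMod.val_natCast, ← zz_pow_mod]

lemma natCast_val_self (a : ZMod 6) : ((a.val : ℕ) : ZMod 6) = a := by
  simp [ZMod.natCast_val, ZMod.cast_id]

lemma ee_add (a b : ZMod 6) : ee (a + b) = ee a * ee b := by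
  rw [← natCast_val_self a, ← natCast_val_self b, ← Nat.cast_add,
    ee_natCast, ee_natCast, ee_natCast, pow_add]

lemma ee_zero : ee 0 = 1 := by simp [ee]

lemma ee_exp (m : ℕ) : zz ^ m = Complex.exp (-2 * (π:ℂ) * Complex.I * m / 6) := by
  rw [zz, ← Complex.exp_nat_mul]; congr 1; ring

lemma ee_ne_one {a : ZMod 6} (h : a ≠ 0) : ee a ≠ 1 := by
  rw [ee, ee_exp]
  intro hc
  rw [Complex.exp_eq_one_iff] at hc
  obtain ⟨n, hn⟩ := hc
  have hpi : (π:ℂ) * Complex.I ≠ 0 :=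
    mul_ne_zero (by exact_mod_cast Real.pi_ne_zero) Complex.I_ne_zero
  have key : (π:ℂ) * Complex.I * (a.val:ℂ) = (π:ℂ) * Complex.I * (-6*n) := by
    linear_combination (-3 : ℂ) * hn
  have h2 : (a.val:ℂ) = ((-6*n : ℤ) : ℂ) := by push_cast; exact mul_left_cancel₀ hpi key
  have h3 : (a.val : ℤ) = -6*n := by exact_mod_cast h2
  have h4 : a.val < 6 := a.val_lt
  have h5 : a.val ≠ 0 := by
    intro h0; apply h; rw [← natCast_val_self a, h0]; rfl
  omega

lemma ee_mul_val (a b : ZMod 6) : ee (a * b) = zz ^ (a.val * b.val) := by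
  rw [ee, ZMod.val_mul, ← zz_pow_mod]

lemma dft_eq (h : ZMod 6 → ℚ) (k : ZMod 6) : dft h k = ∑ x, (h x : ℂ) * ee (k * x) := by
  unfold dft
  refine Finset.sum_congr rfl fun x _ => ?_
  rw [ee_mul_val, ee_exp]
  congr 1
  push_cast; ring

lemma sum_val_range (φ : ℕ → ℂ) : ∑ k : ZMod 6, φ k.val = ∑ j ∈ Finset.range 6, φ j := by
  refine Finset.sum_nbij' (i := fun k => k.val) (j := fun j => (j : ZMod 6)) ?_ ?_ ?_ ?_ ?_
  · intro a _; exact Finset.mem_range.mpr a.val_lt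
  · intro a _; exact Finset.mem_univ _
  · intro a _; simp [ZMod.natCast_val, ZMod.cast_id]
  · intro j hj; exact ZMod.val_natCast_of_lt (Finset.mem_range.mp hj)
  · intro a _; rfl

lemma orth (a : ZMod 6) : ∑ k : ZMod 6, ee (k * a) = if a = 0 then 6 else 0 := by
  have h1 : ∀ k : ZMod 6, ee (k * a) = (ee a) ^ k.val := by
    intro k; rw [ee_mul_val, ee, ← pow_mul, Nat.mul_comm]
  simp only [h1]
  rw [sum_val_range (fun j => ee a ^ j)]
  by_cases ha : a = 0
  · simp [ha, ee_zero]
  · rw [geom_sum_eq (ee_ne_one ha)]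
    have : ee a ^ 6 = 1 := by rw [ee, ← pow_mul, Nat.mul_comm, pow_mul, zz6, one_pow]
    simp [ha, this]

open Finset Real Complex

lemma ee_sum {ι : Type*} (s : Finset ι) (v : ι → ZMod 6) :
    ee (∑ i ∈ s, v i) = ∏ i ∈ s, ee (v i) := by
  classical
  induction s using Finset.cons_induction with
  | empty => simp [ee_zero]
  | cons a s ha ih => rw [Finset.sum_cons, Finset.prod_cons, ee_add, ih]

lemma forward (m : ℕ) (h : ZMod 6 → ℚ) (k : Fin m → ZMod 6) :
    ∑ t : Fin m → ZMod 6, (rho (m+1) h t : ℂ) * ∏ i, ee (k i * t i)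
    = dft h (-∑ i, k i) * ∏ i, dft h (k i) := by
  have inner : ∀ (x : ZMod 6) (i : Fin m),
      ∑ c : ZMod 6, (h (x + c) : ℂ) * ee (k i * c) = ee (-(k i * x)) * dft h (k i) := by
    intro x i
    have step1 : ∑ c : ZMod 6, (h (x + c) : ℂ) * ee (k i * c)
        = ∑ y : ZMod 6, (h y : ℂ) * ee (k i * y + -(k i * x)) := by
      refine Fintype.sum_equiv (Equiv.addLeft x) _ _ fun c => ?_
      simp only [Equiv.coe_addLeft]
      congr 2
      ring
    rw [step1, dft_eq]
    rw [Finset.mul_sum]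
    refine Finset.sum_congr rfl fun y _ => ?_
    rw [ee_add]; ring
  calc ∑ t : Fin m → ZMod 6, (rho (m+1) h t : ℂ) * ∏ i, ee (k i * t i)
      = ∑ t : Fin m → ZMod 6, ∑ x : ZMod 6,
          (h x : ℂ) * ∏ i, ((h (x + t i) : ℂ) * ee (k i * t i)) := by
        refine Finset.sum_congr rfl fun t _ => ?_
        show ((∑ x : ZMod 6, h x * ∏ i : Fin m, h (x + t i) : ℚ) : ℂ) * _ = _
        push_cast
        rw [Finset.sum_mul]
        refine Finset.sum_congr rfl fun x _ => ?_
        rw [Finset.prod_mul_distrib]; ring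
    _ = ∑ x : ZMod 6, (h x : ℂ) * ∑ t : Fin m → ZMod 6,
          ∏ i, ((h (x + t i) : ℂ) * ee (k i * t i)) := by
        rw [Finset.sum_comm]
        simp_rw [Finset.mul_sum]
    _ = ∑ x : ZMod 6, (h x : ℂ) * ∏ i, ∑ c : ZMod 6, ((h (x + c) : ℂ) * ee (k i * c)) := by
        refine Finset.sum_congr rfl fun x _ => ?_
        congr 1
        rw [Finset.prod_univ_sum]
        rw [Fintype.piFinset_univ]
    _ = ∑ x : ZMod 6, (h x : ℂ) * (ee ((-∑ i, k i) * x) * ∏ i, dft h (k i)) := by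
        refine Finset.sum_congr rfl fun x _ => ?_
        simp_rw [inner]
        rw [Finset.prod_mul_distrib, ← ee_sum]
        have hs : ∑ i, -(k i * x) = (-∑ i, k i) * x := by simp [neg_mul, Finset.sum_mul]
        rw [hs]
    _ = dft h (-∑ i, k i) * ∏ i, dft h (k i) := by
        rw [dft_eq, Finset.sum_mul]
        refine Finset.sum_congr rfl fun x _ => ?_
        ring

lemma abs_zz : ‖zz‖ = 1 := by
  have : zz = Complex.exp (((-2 * π / 6 : ℝ) : ℂ) * Complex.I) := by
    rw [zz]; congr 1; push_cast; ring
  rw [this, Complex.norm_exp_ofReal_mul_I]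

lemma ee_neg (a : ZMod 6) : ee (-a) = (starRingEnd ℂ) (ee a) := by
  have h1 : ee a * ee (-a) = 1 := by rw [← ee_add, add_neg_cancel, ee_zero]
  have habs : ‖ee a‖ = 1 := by
    rw [ee, norm_pow, abs_zz, one_pow]
  have h2 : ee a * (starRingEnd ℂ) (ee a) = 1 := by
    rw [Complex.mul_conj, Complex.normSq_eq_norm_sq, habs]; norm_num
  have hne : ee a ≠ 0 := left_ne_zero_of_mul_eq_one h1
  exact mul_left_cancel₀ hne (h1.trans h2.symm)

lemma dft_neg (h : ZMod 6 → ℚ) (k : ZMod 6) : dft h (-k) = (starRingEnd ℂ) (dft h k) := by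
  rw [dft_eq, dft_eq, map_sum]
  refine Finset.sum_congr rfl fun x _ => ?_
  rw [map_mul]
  congr 1
  · exact (map_ratCast (starRingEnd ℂ) (h x)).symm
  · rw [← ee_neg]; congr 1; ring

lemma prodrel (f g : ZMod 6 → ℚ) (hlow : ∀ n : ℕ, 1 ≤ n → n ≤ 5 → rho n f = rho n g)
    (m : ℕ) (hm : m ≤ 4) (k : Fin (m+1) → ZMod 6) (hk : ∑ i, k i = 0) :
    ∏ i, dft f (k i) = ∏ i, dft g (k i) := by
  have hr : rho (m+1) f = rho (m+1) g := hlow (m+1) (by omega) (by omega)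
  have hf := forward m f (fun i => k i.succ)
  have hg := forward m g (fun i => k i.succ)
  rw [hr] at hf
  have heq := hf.symm.trans hg
  have h0 : -∑ i : Fin m, k i.succ = k 0 := by
    rw [Fin.sum_univ_succ] at hk; linear_combination (-1 : ZMod 6) * hk
  rw [h0] at heq
  rw [Fin.prod_univ_succ, Fin.prod_univ_succ]
  exact heq

set_option synthInstance.maxSize 100000 in
set_option synthInstance.maxHeartbeats 4000000 in
set_option maxRecDepth 100000 in
set_option maxHeartbeats 10000000 in
lemma classify5 : ∀ a b c d e : ZMod 6,
    (a = 0) ∨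
    (b = 0) ∨
    (c = 0) ∨
    (d = 0) ∨
    (e = 0) ∨
    ((-(a+b+c+d+e)) = 0) ∨
    (a + b = 0) ∨
    (a + c = 0) ∨
    (a + d = 0) ∨
    (a + e = 0) ∨
    (a + (-(a+b+c+d+e)) = 0) ∨
    (b + c = 0) ∨
    (b + d = 0) ∨
    (b + e = 0) ∨
    (b + (-(a+b+c+d+e)) = 0) ∨
    (c + d = 0) ∨
    (c + e = 0) ∨
    (c + (-(a+b+c+d+e)) = 0) ∨
    (d + e = 0) ∨
    (d + (-(a+b+c+d+e)) = 0) ∨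
    (e + (-(a+b+c+d+e)) = 0) ∨
    (a + b + c = 0) ∨
    (a + b + d = 0) ∨
    (a + b + e = 0) ∨
    (a + b + (-(a+b+c+d+e)) = 0) ∨
    (a + c + d = 0) ∨
    (a + c + e = 0) ∨
    (a + c + (-(a+b+c+d+e)) = 0) ∨
    (a + d + e = 0) ∨
    (a + d + (-(a+b+c+d+e)) = 0) ∨
    (a + e + (-(a+b+c+d+e)) = 0) ∨
    (a = 1 ∧ b = 1 ∧ c = 1 ∧ d = 1 ∧ e = 1 ∧ (-(a+b+c+d+e)) = 1) ∨
    (a = 5 ∧ b = 5 ∧ c = 5 ∧ d = 5 ∧ e = 5 ∧ (-(a+b+c+d+e)) = 5) := by decide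

lemma sixprod (F G : ZMod 6 → ℂ)
    (P1 : ∀ x, x = 0 → F x = G x)
    (P2 : ∀ x y, x + y = 0 → F x * F y = G x * G y)
    (P3 : ∀ x y z, x + y + z = 0 → F x * F y * F z = G x * G y * G z)
    (P4 : ∀ x y z w, x + y + z + w = 0 → F x * F y * F z * F w = G x * G y * G z * G w)
    (P5 : ∀ x y z w v, x + y + z + w + v = 0 →
      F x * F y * F z * F w * F v = G x * G y * G z * G w * G v)
    (H1 : F 1 ^ 6 = G 1 ^ 6) (H5 : F 5 ^ 6 = G 5 ^ 6) :
    ∀ a b c d e x : ZMod 6, a + b + c + d + e + x = 0 →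
      F a * F b * F c * F d * F e * F x = G a * G b * G c * G d * G e * G x := by
  intro a b c d e x hs
  have hx : x = -(a+b+c+d+e) := by linear_combination hs
  subst hx
  rcases classify5 a b c d e with h|h|h|h|h|h|h|h|h|h|h|h|h|h|h|h|h|h|h|h|h|h|h|h|h|h|h|h|h|h|h|h|h
  · have e1 := P1 a h
    have e2 := P5 b c d e (-(a+b+c+d+e)) (by linear_combination (-1 : ZMod 6) * h)
    linear_combination (F b * F c * F d * F e * F (-(a+b+c+d+e))) * e1 + (G a) * e2
  · have e1 := P1 b h
    have e2 := P5 a c d e (-(a+b+c+d+e)) (by linear_combination (-1 : ZMod 6) * h)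
    linear_combination (F a * F c * F d * F e * F (-(a+b+c+d+e))) * e1 + (G b) * e2
  · have e1 := P1 c h
    have e2 := P5 a b d e (-(a+b+c+d+e)) (by linear_combination (-1 : ZMod 6) * h)
    linear_combination (F a * F b * F d * F e * F (-(a+b+c+d+e))) * e1 + (G c) * e2
  · have e1 := P1 d h
    have e2 := P5 a b c e (-(a+b+c+d+e)) (by linear_combination (-1 : ZMod 6) * h)
    linear_combination (F a * F b * F c * F e * F (-(a+b+c+d+e))) * e1 + (G d) * e2
  · have e1 := P1 e h
    have e2 := P5 a b c d (-(a+b+c+d+e)) (by linear_combination (-1 : ZMod 6) * h)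
    linear_combination (F a * F b * F c * F d * F (-(a+b+c+d+e))) * e1 + (G e) * e2
  · have e1 := P1 (-(a+b+c+d+e)) h
    have e2 := P5 a b c d e (by linear_combination (-1 : ZMod 6) * h)
    linear_combination (F a * F b * F c * F d * F e) * e1 + (G (-(a+b+c+d+e))) * e2
  · have e1 := P2 a b h
    have e2 := P4 c d e (-(a+b+c+d+e)) (by linear_combination (-1 : ZMod 6) * h)
    linear_combination (F c * F d * F e * F (-(a+b+c+d+e))) * e1 + (G a * G b) * e2
  · have e1 := P2 a c h
    have e2 := P4 b d e (-(a+b+c+d+e)) (by linear_combination (-1 : ZMod 6) * h)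
    linear_combination (F b * F d * F e * F (-(a+b+c+d+e))) * e1 + (G a * G c) * e2
  · have e1 := P2 a d h
    have e2 := P4 b c e (-(a+b+c+d+e)) (by linear_combination (-1 : ZMod 6) * h)
    linear_combination (F b * F c * F e * F (-(a+b+c+d+e))) * e1 + (G a * G d) * e2
  · have e1 := P2 a e h
    have e2 := P4 b c d (-(a+b+c+d+e)) (by linear_combination (-1 : ZMod 6) * h)
    linear_combination (F b * F c * F d * F (-(a+b+c+d+e))) * e1 + (G a * G e) * e2
  · have e1 := P2 a (-(a+b+c+d+e)) h
    have e2 := P4 b c d e (by linear_combination (-1 : ZMod 6) * h)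
    linear_combination (F b * F c * F d * F e) * e1 + (G a * G (-(a+b+c+d+e))) * e2
  · have e1 := P2 b c h
    have e2 := P4 a d e (-(a+b+c+d+e)) (by linear_combination (-1 : ZMod 6) * h)
    linear_combination (F a * F d * F e * F (-(a+b+c+d+e))) * e1 + (G b * G c) * e2
  · have e1 := P2 b d h
    have e2 := P4 a c e (-(a+b+c+d+e)) (by linear_combination (-1 : ZMod 6) * h)
    linear_combination (F a * F c * F e * F (-(a+b+c+d+e))) * e1 + (G b * G d) * e2
  · have e1 := P2 b e h
    have e2 := P4 a c d (-(a+b+c+d+e)) (by linear_combination (-1 : ZMod 6) * h)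
    linear_combination (F a * F c * F d * F (-(a+b+c+d+e))) * e1 + (G b * G e) * e2
  · have e1 := P2 b (-(a+b+c+d+e)) h
    have e2 := P4 a c d e (by linear_combination (-1 : ZMod 6) * h)
    linear_combination (F a * F c * F d * F e) * e1 + (G b * G (-(a+b+c+d+e))) * e2
  · have e1 := P2 c d h
    have e2 := P4 a b e (-(a+b+c+d+e)) (by linear_combination (-1 : ZMod 6) * h)
    linear_combination (F a * F b * F e * F (-(a+b+c+d+e))) * e1 + (G c * G d) * e2
  · have e1 := P2 c e h
    have e2 := P4 a b d (-(a+b+c+d+e)) (by linear_combination (-1 : ZMod 6) * h)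
    linear_combination (F a * F b * F d * F (-(a+b+c+d+e))) * e1 + (G c * G e) * e2
  · have e1 := P2 c (-(a+b+c+d+e)) h
    have e2 := P4 a b d e (by linear_combination (-1 : ZMod 6) * h)
    linear_combination (F a * F b * F d * F e) * e1 + (G c * G (-(a+b+c+d+e))) * e2
  · have e1 := P2 d e h
    have e2 := P4 a b c (-(a+b+c+d+e)) (by linear_combination (-1 : ZMod 6) * h)
    linear_combination (F a * F b * F c * F (-(a+b+c+d+e))) * e1 + (G d * G e) * e2
  · have e1 := P2 d (-(a+b+c+d+e)) h
    have e2 := P4 a b c e (by linear_combination (-1 : ZMod 6) * h)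
    linear_combination (F a * F b * F c * F e) * e1 + (G d * G (-(a+b+c+d+e))) * e2
  · have e1 := P2 e (-(a+b+c+d+e)) h
    have e2 := P4 a b c d (by linear_combination (-1 : ZMod 6) * h)
    linear_combination (F a * F b * F c * F d) * e1 + (G e * G (-(a+b+c+d+e))) * e2
  · have e1 := P3 a b c h
    have e2 := P3 d e (-(a+b+c+d+e)) (by linear_combination (-1 : ZMod 6) * h)
    linear_combination (F d * F e * F (-(a+b+c+d+e))) * e1 + (G a * G b * G c) * e2
  · have e1 := P3 a b d h
    have e2 := P3 c e (-(a+b+c+d+e)) (by linear_combination (-1 : ZMod 6) * h)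
    linear_combination (F c * F e * F (-(a+b+c+d+e))) * e1 + (G a * G b * G d) * e2
  · have e1 := P3 a b e h
    have e2 := P3 c d (-(a+b+c+d+e)) (by linear_combination (-1 : ZMod 6) * h)
    linear_combination (F c * F d * F (-(a+b+c+d+e))) * e1 + (G a * G b * G e) * e2
  · have e1 := P3 a b (-(a+b+c+d+e)) h
    have e2 := P3 c d e (by linear_combination (-1 : ZMod 6) * h)
    linear_combination (F c * F d * F e) * e1 + (G a * G b * G (-(a+b+c+d+e))) * e2
  · have e1 := P3 a c d h
    have e2 := P3 b e (-(a+b+c+d+e)) (by linear_combination (-1 : ZMod 6) * h)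
    linear_combination (F b * F e * F (-(a+b+c+d+e))) * e1 + (G a * G c * G d) * e2
  · have e1 := P3 a c e h
    have e2 := P3 b d (-(a+b+c+d+e)) (by linear_combination (-1 : ZMod 6) * h)
    linear_combination (F b * F d * F (-(a+b+c+d+e))) * e1 + (G a * G c * G e) * e2
  · have e1 := P3 a c (-(a+b+c+d+e)) h
    have e2 := P3 b d e (by linear_combination (-1 : ZMod 6) * h)
    linear_combination (F b * F d * F e) * e1 + (G a * G c * G (-(a+b+c+d+e))) * e2
  · have e1 := P3 a d e h
    have e2 := P3 b c (-(a+b+c+d+e)) (by linear_combination (-1 : ZMod 6) * h)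
    linear_combination (F b * F c * F (-(a+b+c+d+e))) * e1 + (G a * G d * G e) * e2
  · have e1 := P3 a d (-(a+b+c+d+e)) h
    have e2 := P3 b c e (by linear_combination (-1 : ZMod 6) * h)
    linear_combination (F b * F c * F e) * e1 + (G a * G d * G (-(a+b+c+d+e))) * e2
  · have e1 := P3 a e (-(a+b+c+d+e)) h
    have e2 := P3 b c d (by linear_combination (-1 : ZMod 6) * h)
    linear_combination (F b * F c * F d) * e1 + (G a * G e * G (-(a+b+c+d+e))) * e2
  · obtain ⟨h1, h2, h3, h4, h5, h6⟩ := h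
    rw [h6, h1, h2, h3, h4, h5]
    linear_combination H1
  · obtain ⟨h1, h2, h3, h4, h5, h6⟩ := h
    rw [h6, h1, h2, h3, h4, h5]
    linear_combination H5
lemma rho6_key (h : ZMod 6 → ℚ) (t : Fin 5 → ZMod 6) :
    ∑ κ : Fin 5 → ZMod 6, (dft h (-∑ i, κ i) * ∏ i, dft h (κ i)) * ∏ i, ee (-(κ i * t i))
    = (6:ℂ)^5 * (rho 6 h t : ℂ) := by
  have fwd : ∀ κ : Fin 5 → ZMod 6,
      (dft h (-∑ i, κ i) * ∏ i, dft h (κ i))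
      = ∑ s : Fin 5 → ZMod 6, (rho 6 h s : ℂ) * ∏ i, ee (κ i * s i) :=
    fun κ => (forward 5 h κ).symm
  have inner : ∀ (s : Fin 5 → ZMod 6) (i : Fin 5),
      ∑ c : ZMod 6, ee (c * s i) * ee (-(c * t i)) = if s i = t i then (6:ℂ) else 0 := by
    intro s i
    have hc : ∀ c : ZMod 6, ee (c * s i) * ee (-(c * t i)) = ee (c * (s i - t i)) := by
      intro c; rw [← ee_add]; congr 1; ring
    simp_rw [hc]
    rw [orth]
    congr 1
    simp [sub_eq_zero]
  have prodif : ∀ s : Fin 5 → ZMod 6,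
      (∏ i, if s i = t i then (6:ℂ) else 0) = if s = t then (6:ℂ)^5 else 0 := by
    intro s
    by_cases hst : s = t
    · subst hst; simp
    · rw [if_neg hst]
      obtain ⟨i, hi⟩ : ∃ i, s i ≠ t i := by
        by_contra hcon; push_neg at hcon; exact hst (funext hcon)
      exact Finset.prod_eq_zero (Finset.mem_univ i) (if_neg hi)
  calc ∑ κ : Fin 5 → ZMod 6, (dft h (-∑ i, κ i) * ∏ i, dft h (κ i)) * ∏ i, ee (-(κ i * t i))
      = ∑ κ : Fin 5 → ZMod 6, ∑ s : Fin 5 → ZMod 6,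
          (rho 6 h s : ℂ) * ∏ i, (ee (κ i * s i) * ee (-(κ i * t i))) := by
        refine Finset.sum_congr rfl fun κ _ => ?_
        rw [fwd κ, Finset.sum_mul]
        refine Finset.sum_congr rfl fun s _ => ?_
        rw [Finset.prod_mul_distrib]; ring
    _ = ∑ s : Fin 5 → ZMod 6, (rho 6 h s : ℂ) * ∑ κ : Fin 5 → ZMod 6,
          ∏ i, (ee (κ i * s i) * ee (-(κ i * t i))) := by
        rw [Finset.sum_comm]
        simp_rw [Finset.mul_sum]
    _ = ∑ s : Fin 5 → ZMod 6, (rho 6 h s : ℂ) * ∏ i : Fin 5,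
          (∑ c : ZMod 6, ee (c * s i) * ee (-(c * t i))) := by
        refine Finset.sum_congr rfl fun s _ => ?_
        congr 1
        rw [Finset.prod_univ_sum, Fintype.piFinset_univ]
    _ = ∑ s : Fin 5 → ZMod 6, (rho 6 h s : ℂ) * (if s = t then (6:ℂ)^5 else 0) := by
        refine Finset.sum_congr rfl fun s _ => ?_
        simp_rw [inner s]
        rw [prodif s]
    _ = (6:ℂ)^5 * (rho 6 h t : ℂ) := by
        simp_rw [mul_ite, mul_zero]
        rw [Finset.sum_ite_eq' Finset.univ t]
        simp [mul_comm]

lemma rho6_eq (f g : ZMod 6 → ℚ)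
    (hQ : ∀ k : Fin 6 → ZMod 6, ∑ i, k i = 0 → ∏ i, dft f (k i) = ∏ i, dft g (k i)) :
    rho 6 f = rho 6 g := by
  funext t
  have hc : ∀ κ : Fin 5 → ZMod 6,
      dft f (-∑ i, κ i) * ∏ i, dft f (κ i) = dft g (-∑ i, κ i) * ∏ i, dft g (κ i) := by
    intro κ
    have hsum : ∑ i : Fin (5+1), (Fin.cons (-∑ i, κ i) κ : Fin (5+1) → ZMod 6) i = 0 := by
      rw [Fin.sum_univ_succ]
      simp [Fin.cons_succ, neg_add_cancel]
    have h2 := hQ (Fin.cons (-∑ i, κ i) κ) hsum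
    simpa [Fin.prod_univ_succ, Fin.cons_succ, Fin.cons_zero] using h2
  have hf := rho6_key f t
  have hg := rho6_key g t
  simp_rw [hc] at hf
  have := hf.symm.trans hg
  have h6 : ((rho 6 f t : ℚ) : ℂ) = ((rho 6 g t : ℚ) : ℂ) :=
    mul_left_cancel₀ (by norm_num : (6:ℂ)^5 ≠ 0) this
  exact_mod_cast h6

theorem classification_of_Z6_counterexamples (f g : ZMod 6 → ℚ)
    (hlow : ∀ n : ℕ, 1 ≤ n → n ≤ 5 → rho n f = rho n g)
    (h6 : rho 6 f ≠ rho 6 g) :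
    dft f 0 = dft g 0 ∧
    (dft f 2 = 0 ∧ dft g 2 = 0) ∧ (dft f 3 = 0 ∧ dft g 3 = 0) ∧
    (dft f 4 = 0 ∧ dft g 4 = 0) ∧
    ‖dft f 1‖ = ‖dft g 1‖ ∧
    dft f 1 ^ 6 ≠ dft g 1 ^ 6 := by
  have P1 : ∀ x : ZMod 6, x = 0 → dft f x = dft g x := by
    intro x hx
    have := prodrel f g hlow 0 (by omega) ![x] (by simpa using hx)
    simpa using this
  have P2 : ∀ x y : ZMod 6, x + y = 0 → dft f x * dft f y = dft g x * dft g y := by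
    intro x y hxy
    have := prodrel f g hlow 1 (by omega) ![x, y] (by simpa [Fin.sum_univ_two] using hxy)
    simpa [Fin.prod_univ_two] using this
  have P3 : ∀ x y z : ZMod 6, x + y + z = 0 →
      dft f x * dft f y * dft f z = dft g x * dft g y * dft g z := by
    intro x y z hxyz
    have := prodrel f g hlow 2 (by omega) ![x, y, z]
      (by simpa [Fin.sum_univ_three] using hxyz)
    simpa [Fin.prod_univ_three] using this
  have P4 : ∀ x y z w : ZMod 6, x + y + z + w = 0 →
      dft f x * dft f y * dft f z * dft f w = dft g x * dft g y * dft g z * dft g w := by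
    intro x y z w hx
    have := prodrel f g hlow 3 (by omega) ![x, y, z, w]
      (by simpa [Fin.sum_univ_four] using hx)
    simpa [Fin.prod_univ_four] using this
  have P5 : ∀ x y z w v : ZMod 6, x + y + z + w + v = 0 →
      dft f x * dft f y * dft f z * dft f w * dft f v
      = dft g x * dft g y * dft g z * dft g w * dft g v := by
    intro x y z w v hx
    have := prodrel f g hlow 4 (by omega) ![x, y, z, w, v]
      (by simpa [Fin.sum_univ_five] using hx)
    simpa [Fin.prod_univ_five] using this
  have c1f : dft f 5 = (starRingEnd ℂ) (dft f 1) := by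
    have h5 : (5 : ZMod 6) = -1 := by decide
    rw [h5, dft_neg]
  have c1g : dft g 5 = (starRingEnd ℂ) (dft g 1) := by
    have h5 : (5 : ZMod 6) = -1 := by decide
    rw [h5, dft_neg]
  have c2f : dft f 4 = (starRingEnd ℂ) (dft f 2) := by
    have h4 : (4 : ZMod 6) = -2 := by decide
    rw [h4, dft_neg]
  have c2g : dft g 4 = (starRingEnd ℂ) (dft g 2) := by
    have h4 : (4 : ZMod 6) = -2 := by decide
    rw [h4, dft_neg]
  have hHimp : dft f 1 ^ 6 = dft g 1 ^ 6 → rho 6 f = rho 6 g := by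
    intro hh
    have h5 : dft f 5 ^ 6 = dft g 5 ^ 6 := by
      rw [c1f, c1g, ← map_pow, ← map_pow, hh]
    apply rho6_eq f g
    intro k hk
    rw [Fin.sum_univ_six] at hk
    rw [Fin.prod_univ_six, Fin.prod_univ_six]
    exact sixprod (dft f) (dft g) P1 P2 P3 P4 P5 hh h5 (k 0) (k 1) (k 2) (k 3) (k 4) (k 5) hk
  have hne : dft f 1 ^ 6 ≠ dft g 1 ^ 6 := fun hh => h6 (hHimp hh)
  have h222 := P3 2 2 2 (by decide)
  have h33 := P2 3 3 (by decide)
  have hF2 : dft f 2 = 0 := by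
    by_contra h2ne
    apply hne
    have h1122 := P4 1 1 2 2 (by decide)
    have key : dft f 1 ^ 6 * dft f 2 ^ 6 = dft g 1 ^ 6 * dft g 2 ^ 6 := by
      linear_combination ((dft f 1 ^ 2 * dft f 2 ^ 2) ^ 2
        + dft f 1 ^ 2 * dft f 2 ^ 2 * dft g 1 ^ 2 * dft g 2 ^ 2
        + (dft g 1 ^ 2 * dft g 2 ^ 2) ^ 2) * h1122
    have hg6 : dft g 2 ^ 6 = dft f 2 ^ 6 := by
      linear_combination (-(dft f 2 ^ 3 + dft g 2 ^ 3)) * h222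
    rw [hg6] at key
    exact mul_right_cancel₀ (pow_ne_zero 6 h2ne) key
  have hG2 : dft g 2 = 0 := by
    have h24 := P2 2 4 (by decide)
    have h0 : dft g 2 * (starRingEnd ℂ) (dft g 2) = 0 := by
      rw [← c2g, ← h24, hF2, zero_mul]
    rw [Complex.mul_conj] at h0
    have : Complex.normSq (dft g 2) = 0 := by exact_mod_cast h0
    exact Complex.normSq_eq_zero.mp this
  have hF3 : dft f 3 = 0 := by
    by_contra h3ne
    apply hne
    have h1113 := P4 1 1 1 3 (by decide)
    have key : dft f 1 ^ 6 * dft f 3 ^ 2 = dft g 1 ^ 6 * dft g 3 ^ 2 := by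
      linear_combination (dft f 1 ^ 3 * dft f 3 + dft g 1 ^ 3 * dft g 3) * h1113
    have hg2 : dft g 3 ^ 2 = dft f 3 ^ 2 := by
      linear_combination -h33
    rw [hg2] at key
    exact mul_right_cancel₀ (pow_ne_zero 2 h3ne) key
  have hG3 : dft g 3 = 0 := by
    have h0 : dft g 3 * dft g 3 = 0 := by rw [← h33, hF3, zero_mul]
    exact mul_self_eq_zero.mp h0
  have hF4 : dft f 4 = 0 := by rw [c2f, hF2, map_zero]
  have hG4 : dft g 4 = 0 := by rw [c2g, hG2, map_zero]
  have habs : ‖dft f 1‖ = ‖dft g 1‖ := by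
    have h15 := P2 1 5 (by decide)
    rw [c1f, c1g, Complex.mul_conj, Complex.mul_conj] at h15
    have : Complex.normSq (dft f 1) = Complex.normSq (dft g 1) := by exact_mod_cast h15
    rw [Complex.normSq_eq_norm_sq, Complex.normSq_eq_norm_sq] at this
    exact (pow_left_inj₀ (norm_nonneg _) (norm_nonneg _) two_ne_zero).mp this
  exact ⟨P1 0 rfl, ⟨hF2, hG2⟩, ⟨hF3, hG3⟩, ⟨hF4, hG4⟩, habs, hne⟩
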